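/- SCOOC-naive semantics is SCC-semi-rich: for every AF F = ⟨Ar, att⟩ with exactly one SCC and every argument c ∈ Ar with (c,c) ∉ att, there exists an SCOOC-naive extension E of F such that E does not attack c (indeed c ∈ E). -/

import Mathlib

/-
Let `H` consist of `c` and the arguments on no odd cycle. All walks inside `H` from an argument
`v` to `c` have the same parity: close them up with an injective path from `c` to `v`; an odd
closed walk contains a simple odd cycle, whose vertices all lie on odd cycles, so it uses no edge
inside `H` (that would be the loop at `c`), and it cannot run along the path alone.
The arguments with an even walk to `c` inside `H` therefore form a conflict-free set `Ev`
containing `c`. The arguments of `H` with no walk to `c` inside `H` and not attacked by `Ev` lie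
on no odd cycle, so by Richardson's theorem they have a kernel `K`. Every argument that lies,
together with its attackers, outside odd cycles is in `Ev ∪ K` or attacked by it (an argument
with an odd walk to `c` is attacked by an argument of `Ev`, as `F` is strongly connected), so
every maximal conflict-free superset of `Ev ∪ K` is an SCOOC-naive extension containing `c`.
-/

variable {A : Type*}

def conflictFree (att : A → A → Prop) (S : Set A) : Prop :=
  ∀ b ∈ S, ∀ c ∈ S, ¬ att b c

def attacks (att : A → A → Prop) (S : Set A) (a : A) : Prop :=
  ∃ b ∈ S, att b a

def inOddCycle (att : A → A → Prop) (x : A) : Prop :=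
  ∃ n : ℕ, Odd n ∧ ∃ p : ℕ → A, p 0 = x ∧ p n = x ∧
    (∀ i, i < n → att (p i) (p (i + 1))) ∧
    (∀ i j, i < j → j ≤ n → p i = p j → i = 0 ∧ j = n)

def scooc (att : A → A → Prop) (S : Set A) : Prop :=
  ∀ x, ¬ inOddCycle att x → (∀ y, att y x → ¬ inOddCycle att y) →
    (∀ b ∈ S, ¬ att b x) → x ∈ S

def sccoocNaiveExt (att : A → A → Prop) (S : Set A) : Prop :=
  conflictFree att S ∧ scooc att S ∧
    ∀ T, conflictFree att T → scooc att T → S ⊆ T → T = S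

/-- The AF has exactly one SCC: any two arguments are equal or mutually reachable. -/
def oneSCC (att : A → A → Prop) : Prop :=
  ∀ x y : A, x = y ∨ (Relation.TransGen att x y ∧ Relation.TransGen att y x)

section Walks

variable {r r' : A → A → Prop} {S S' : Set A} {p q : ℕ → A} {u v w : A} {i j k m n : ℕ}

def IsWalk (r : A → A → Prop) (p : ℕ → A) (n : ℕ) : Prop :=
  ∀ i < n, r (p i) (p (i + 1))

def IsCycle (r : A → A → Prop) (p : ℕ → A) (n : ℕ) : Prop :=
  IsWalk r p n ∧ p 0 = p n ∧ ∀ i j, i < j → j ≤ n → p i = p j → i = 0 ∧ j = n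

def WalkEdge (p : ℕ → A) (n : ℕ) (a b : A) : Prop :=
  ∃ i < n, p i = a ∧ p (i + 1) = b

def cutOut (p : ℕ → A) (i j : ℕ) : ℕ → A :=
  fun t => if t ≤ i then p t else p (t + (j - i))

theorem cutOut_zero : cutOut p i j 0 = p 0 := by
  simp [cutOut]

theorem cutOut_sub (hij : i ≤ j) (hjn : j ≤ n) (heq : p i = p j) :
    cutOut p i j (n - (j - i)) = p n := by
  unfold cutOut
  split_ifs with h
  · obtain rfl : j = n := by omega
    rw [show j - (j - i) = i by omega, heq]
  · congr 1; omega

namespace IsWalk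

theorem mono (hr : ∀ a b, r a b → r' a b) (h : IsWalk r p n) : IsWalk r' p n :=
  fun i hi => hr _ _ (h i hi)

theorem shift (h : IsWalk r p n) (hk : k + m ≤ n) : IsWalk r (fun t => p (k + t)) m :=
  fun t ht => by simpa [add_assoc] using h (k + t) (by omega)

theorem cutOut (h : IsWalk r p n) (hij : i ≤ j) (hjn : j ≤ n) (heq : p i = p j) :
    IsWalk r (cutOut p i j) (n - (j - i)) := by
  intro t ht
  simp only [_root_.cutOut]
  by_cases h1 : t + 1 ≤ i
  · rw [if_pos (by omega), if_pos h1]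
    exact h t (by omega)
  by_cases h2 : t ≤ i
  · obtain rfl : t = i := by omega
    rw [if_pos le_rfl, if_neg h1, heq, show t + 1 + (j - t) = j + 1 by omega]
    exact h j (by omega)
  · rw [if_neg h2, if_neg h1, show t + 1 + (j - i) = t + (j - i) + 1 by omega]
    exact h _ (by omega)

theorem exists_injOn (h : IsWalk r p n) :
    ∃ m q, IsWalk r q m ∧ q 0 = p 0 ∧ q m = p n ∧ Set.InjOn q (Set.Iic m) := by
  induction n using Nat.strong_induction_on generalizing p with
  | _ n ih =>
  by_cases hinj : Set.InjOn p (Set.Iic n)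
  · exact ⟨n, p, h, rfl, rfl, hinj⟩
  simp only [Set.InjOn, Set.mem_Iic, not_forall] at hinj
  obtain ⟨i, hi, j, hj, heq, hne⟩ := hinj
  wlog hij : i < j generalizing i j
  · exact this j hj i hi heq.symm (Ne.symm hne) (by omega)
  obtain ⟨m, q, hq, hq0, hqm, hqinj⟩ := ih _ (by omega) (h.cutOut hij.le hj heq)
  exact ⟨m, q, hq, hq0.trans cutOut_zero, hqm.trans (cutOut_sub hij.le hj heq), hqinj⟩

theorem exists_odd_isCycle (h : IsWalk r p n) (hcl : p 0 = p n) (hn : Odd n) :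
    ∃ m q, Odd m ∧ IsCycle r q m := by
  induction n using Nat.strong_induction_on generalizing p with
  | _ n ih =>
  by_cases hs : ∀ i j, i < j → j ≤ n → p i = p j → i = 0 ∧ j = n
  · exact ⟨n, p, hn, h, hcl, hs⟩
  push Not at hs
  obtain ⟨i, j, hij, hjn, heq, hne⟩ := hs
  -- the repeated vertex splits `p` into two shorter closed walks, one of which is odd
  rcases Nat.even_or_odd (j - i) with he | ho
  · refine ih _ (by omega) (h.cutOut hij.le hjn heq) ?_ (Nat.Odd.sub_even (by omega) hn he)
    rw [cutOut_zero, cutOut_sub hij.le hjn heq, hcl]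
  · refine ih _ (by omega) (h.shift (k := i) (m := j - i) (by omega)) ?_ ho
    simpa [Nat.add_sub_cancel' hij.le] using heq

end IsWalk

theorem eq_zero_of_isWalk_walkEdge {P : ℕ → A} (hP : Set.InjOn P (Set.Iic m))
    (hq : IsWalk (WalkEdge P m) q k) (hcl : q 0 = q k) : k = 0 := by
  rcases Nat.eq_zero_or_pos k with hk | hk
  · exact hk
  obtain ⟨j, hj, hj0, -⟩ := hq 0 hk
  -- each step of `q` advances by one position along `P`
  have hrun : ∀ t ≤ k, j + t ≤ m ∧ q t = P (j + t) := by
    intro t ht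
    induction t with
    | zero => exact ⟨hj.le, hj0.symm⟩
    | succ t ih =>
      obtain ⟨hjt, hqt⟩ := ih (by omega)
      obtain ⟨a, ha, hPa, hPa1⟩ := hq t (by omega)
      obtain rfl : a = j + t := hP (Set.mem_Iic.2 ha.le) (Set.mem_Iic.2 hjt) (hPa.trans hqt)
      exact ⟨by omega, hPa1.symm⟩
  obtain ⟨hjk, hqk⟩ := hrun k le_rfl
  have := hP (Set.mem_Iic.2 hjk) (Set.mem_Iic.2 hj.le)
    (hqk.symm.trans (hcl.symm.trans hj0.symm))
  omega

namespace IsCycle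

theorem mono (hr : ∀ a b, r a b → r' a b) (h : IsCycle r p n) : IsCycle r' p n :=
  ⟨h.1.mono hr, h.2⟩

theorem inOddCycle_zero (h : IsCycle r p n) (hn : Odd n) : inOddCycle r (p 0) :=
  ⟨n, hn, p, rfl, h.2.1.symm, h.1, h.2.2⟩

theorem rotate (h : IsCycle r p n) (hk : k ≤ n) :
    IsCycle r (fun i => p (if i ≤ n - k then k + i else i - (n - k))) n := by
  obtain ⟨hw, hcl, hs⟩ := h
  have hs' : ∀ a b, a ≤ n → b ≤ n → p a = p b →
      a = b ∨ (a = 0 ∧ b = n) ∨ (a = n ∧ b = 0) := by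
    intro a b ha hb hab
    rcases lt_trichotomy a b with h | h | h
    · exact Or.inr (Or.inl (hs a b h hb hab))
    · exact Or.inl h
    · exact Or.inr (Or.inr (hs b a h ha hab.symm).symm)
  refine ⟨fun i hi => ?_, ?_, fun i j hij hjn he => ?_⟩
  · by_cases h1 : i + 1 ≤ n - k
    · dsimp only
      rw [if_pos (show i ≤ n - k by omega), if_pos h1, ← add_assoc]
      exact hw (k + i) (by omega)
    by_cases h2 : i ≤ n - k
    · simp only [if_pos h2, if_neg h1, show k + i = n by omega, ← hcl,
        show i + 1 - (n - k) = 0 + 1 by omega]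
      exact hw 0 (by omega)
    · simp only [if_neg h2, if_neg h1, show i + 1 - (n - k) = i - (n - k) + 1 by omega]
      exact hw _ (by omega)
  · simp only [zero_le, if_true, add_zero]
    split_ifs with h
    · obtain rfl : k = 0 := by omega
      simpa using hcl
    · congr 1; omega
  · simp only at he
    split_ifs at he with h1 h2 h2 <;>
      rcases hs' _ _ (by omega) (by omega) he with h | h | h <;> omega

theorem inOddCycle (h : IsCycle r p n) (hn : Odd n) (hk : k ≤ n) : inOddCycle r (p k) := by
  simpa using (h.rotate hk).inOddCycle_zero hn

end IsCycle

/-- `WalkIn r S u v n`: there is an `r`-walk of length `n` from `u` to `v` with all its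
vertices in `S`. -/
inductive WalkIn (r : A → A → Prop) (S : Set A) : A → A → ℕ → Prop
  | nil {u : A} : u ∈ S → WalkIn r S u u 0
  | cons {u v w : A} {n : ℕ} : u ∈ S → r u v → WalkIn r S v w n → WalkIn r S u w (n + 1)

namespace WalkIn

theorem left_mem : WalkIn r S u v n → u ∈ S
  | nil h => h
  | cons h _ _ => h

theorem right_mem (h : WalkIn r S u v n) : v ∈ S := by
  induction h with
  | nil h => exact h
  | cons _ _ _ ih => exact ih

theorem single (hu : u ∈ S) (hv : v ∈ S) (h : r u v) : WalkIn r S u v 1 :=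
  cons hu h (nil hv)

theorem append (h : WalkIn r S u v m) (h' : WalkIn r S v w n) : WalkIn r S u w (m + n) := by
  induction h with
  | nil => simpa using h'
  | cons hu huv _ ih =>
    rw [Nat.add_right_comm]
    exact cons hu huv (ih h')

theorem mono (hS : S ⊆ S') (hr : ∀ a ∈ S, ∀ b ∈ S, r a b → r' a b)
    (h : WalkIn r S u v n) : WalkIn r' S' u v n := by
  induction h with
  | nil hu => exact nil (hS hu)
  | cons hu huv h ih => exact cons (hS hu) (hr _ hu _ h.left_mem huv) ih

theorem exists_last (h : WalkIn r S u w (n + 1)) : ∃ v, WalkIn r S u v n ∧ r v w := by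
  induction n generalizing u with
  | zero =>
    obtain _ | ⟨hu, huv, _ | _⟩ := h
    exact ⟨u, nil hu, huv⟩
  | succ n ih =>
    obtain _ | ⟨hu, huv, h⟩ := h
    obtain ⟨v, hv, hvw⟩ := ih h
    exact ⟨v, cons hu huv hv, hvw⟩

theorem exists_isWalk (h : WalkIn r S u v n) :
    ∃ p, IsWalk r p n ∧ (∀ i ≤ n, p i ∈ S) ∧ p 0 = u ∧ p n = v := by
  induction h with
  | @nil u hu =>
    exact ⟨fun _ => u, fun i hi => absurd hi (Nat.not_lt_zero i), fun _ _ => hu, rfl, rfl⟩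
  | @cons u _ _ _ hu huv _ ih =>
    obtain ⟨p, hp, hpS, hp0, hpn⟩ := ih
    refine ⟨fun i => Nat.casesOn i u p, ?_, ?_, rfl, hpn⟩
    · rintro (_ | i) hi
      · simpa [hp0] using huv
      · exact hp i (by omega)
    · rintro (_ | i) hi
      · exact hu
      · exact hpS i (by omega)

theorem of_isWalk (hp : IsWalk r p n) (hpS : ∀ i ≤ n, p i ∈ S) :
    WalkIn r S (p 0) (p n) n := by
  induction n generalizing p with
  | zero => exact nil (hpS 0 le_rfl)
  | succ n ih =>
    refine cons (hpS 0 (by omega)) (hp 0 (by omega)) ?_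
    simpa [add_comm] using
      ih (p := fun t => p (1 + t)) (hp.shift (by omega)) (fun i hi => hpS _ (by omega))

theorem of_reflTransGen (h : Relation.ReflTransGen r u v) : ∃ n, WalkIn r Set.univ u v n := by
  induction h using Relation.ReflTransGen.head_induction_on with
  | refl => exact ⟨0, nil trivial⟩
  | head huv _ ih =>
    obtain ⟨n, h⟩ := ih
    exact ⟨n + 1, cons trivial huv h⟩

theorem exists_isCycle (h : WalkIn r S u u n) (hn : Odd n) :
    ∃ m q, Odd m ∧ IsCycle r q m ∧ q 0 ∈ S := by
  obtain ⟨p, hp, hpS, hp0, hpn⟩ := h.exists_isWalk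
  have hpS' : IsWalk (fun a b => r a b ∧ a ∈ S) p n := fun i hi => ⟨hp i hi, hpS i hi.le⟩
  obtain ⟨m, q, hm, hq⟩ := hpS'.exists_odd_isCycle (hp0.trans hpn.symm) hn
  exact ⟨m, q, hm, hq.mono fun _ _ h => h.1, (hq.1 0 hm.pos).2⟩

end WalkIn

end Walks

section Kernel

variable {r : A → A → Prop} {S K K' : Set A} {u v v₀ : A} {l m n : ℕ}

theorem attacks.mono (h : attacks r K v) (hK : K ⊆ K') : attacks r K' v :=
  let ⟨b, hb, hbv⟩ := h
  ⟨b, hK hb, hbv⟩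

theorem exists_source [Finite A] (hne : S.Nonempty) :
    ∃ v₀ ∈ S, ∀ u, (∃ n, WalkIn r S u v₀ n) → ∃ n, WalkIn r S v₀ u n := by
  obtain ⟨v₀, hv₀, hmin⟩ := exists_minimalFor_of_wellFoundedLT (· ∈ S)
    (fun v => {u | ∃ n, WalkIn r S u v n}) hne
  refine ⟨v₀, hv₀, fun u ⟨n, hu⟩ => ?_⟩
  have hsub : {w | ∃ n, WalkIn r S w u n} ⊆ {w | ∃ n, WalkIn r S w v₀ n} :=
    fun w ⟨m, hw⟩ => ⟨m + n, hw.append hu⟩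
  exact hmin hu.left_mem hsub ⟨0, WalkIn.nil hv₀⟩

theorem even_add_of_walkIn (hS : ∀ u n, WalkIn r S u u n → Even n) (h₁ : WalkIn r S u v m)
    (h₂ : WalkIn r S u v n) (h₃ : WalkIn r S v u l) : Even (m + n) := by
  have := hS _ _ (h₁.append h₃)
  have := hS _ _ (h₂.append h₃)
  grind

def evenPart (r : A → A → Prop) (S : Set A) (v₀ : A) : Set A :=
  {t | (∃ n, Even n ∧ WalkIn r S v₀ t n) ∧ ∃ n, WalkIn r S t v₀ n}

theorem conflictFree_evenPart (hS : ∀ u n, WalkIn r S u u n → Even n) :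
    conflictFree r (evenPart r S v₀) := by
  rintro a ⟨⟨m, hm, ha⟩, -⟩ b ⟨⟨n, hn, hb⟩, l, hb₀⟩ hab
  have := even_add_of_walkIn hS (ha.append (.single ha.right_mem hb.right_mem hab)) hb hb₀
  grind

theorem attacks_evenPart (ht : WalkIn r S v₀ v n) (hv : ∃ n, WalkIn r S v v₀ n)
    (hvK : v ∉ evenPart r S v₀) : attacks r (evenPart r S v₀) v := by
  obtain ⟨l, hl⟩ := hv
  obtain _ | n := n
  · exact absurd ⟨⟨0, Even.zero, ht⟩, l, hl⟩ hvK
  obtain ⟨w, hw, hwv⟩ := ht.exists_last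
  have hw₀ : WalkIn r S w v₀ (1 + l) := (WalkIn.single hw.right_mem ht.right_mem hwv).append hl
  refine ⟨w, ⟨⟨n, ?_, hw⟩, _, hw₀⟩, hwv⟩
  by_contra hn
  exact hvK ⟨⟨n + 1, by grind, ht⟩, l, hl⟩

/-- Richardson's theorem: a finite digraph without odd closed walks has a kernel. -/
theorem exists_kernel [Finite A] (S : Set A) (hS : ∀ u n, WalkIn r S u u n → Even n) :
    ∃ K ⊆ S, conflictFree r K ∧ ∀ v ∈ S, v ∉ K → attacks r K v := by
  induction S using WellFoundedLT.induction with
  | _ S ih =>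
  rcases S.eq_empty_or_nonempty with rfl | hne
  · exact ⟨∅, le_rfl, by simp [conflictFree], by simp⟩
  obtain ⟨v₀, hv₀, hsrc⟩ := exists_source (r := r) hne
  set T := {t | (∃ n, WalkIn r S v₀ t n) ∧ ∃ n, WalkIn r S t v₀ n}
  set K₀ := evenPart r S v₀
  have hTS : T ⊆ S := fun t ⟨_, _, ht⟩ => ht.left_mem
  have hK₀T : K₀ ⊆ T := fun t ⟨⟨n, _, ht⟩, hback⟩ => ⟨⟨n, ht⟩, hback⟩
  have hinit : ∀ u ∈ S, ∀ t ∈ T, r u t → u ∈ T := by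
    rintro u hu t ⟨-, n, ht⟩ hut
    have hu₀ : ∃ n, WalkIn r S u v₀ n :=
      ⟨1 + n, (WalkIn.single hu ht.left_mem hut).append ht⟩
    exact ⟨hsrc u hu₀, hu₀⟩
  set S' := {v ∈ S | v ∉ T ∧ ¬ attacks r K₀ v}
  have hS' : S' < S := by
    refine (Set.ssubset_iff_of_subset fun v hv => hv.1).2 ⟨v₀, hv₀, fun h => h.2.1 ?_⟩
    exact ⟨⟨0, .nil hv₀⟩, 0, .nil hv₀⟩
  obtain ⟨K', hK'S', hK'cf, hK'att⟩ := ih S' hS'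
    fun u n h => hS u n (h.mono (fun v hv => hv.1) fun _ _ _ _ h => h)
  refine ⟨K₀ ∪ K', Set.union_subset (hK₀T.trans hTS) fun v hv => (hK'S' hv).1, ?_, ?_⟩
  · rintro a (ha | ha) b (hb | hb) hab
    · exact conflictFree_evenPart hS a ha b hb hab
    · exact (hK'S' hb).2.2 ⟨a, ha, hab⟩
    · exact (hK'S' ha).2.1 (hinit a (hK'S' ha).1 b (hK₀T hb) hab)
    · exact hK'cf a ha b hb hab
  · intro v hv hvK
    by_cases hvT : v ∈ T
    · obtain ⟨⟨n, hn⟩, hv₀'⟩ := hvT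
      exact (attacks_evenPart hn hv₀' fun h => hvK (.inl h)).mono Set.subset_union_left
    by_cases hvA : attacks r K₀ v
    · exact hvA.mono Set.subset_union_left
    · exact (hK'att v ⟨hv, hvT, hvA⟩ fun h => hvK (.inr h)).mono Set.subset_union_right

end Kernel

section Seed

variable {att : A → A → Prop} {c u v x : A} {S S₀ E : Set A} {m n : ℕ}

def offOddCycles (att : A → A → Prop) : Set A :=
  {v | ¬ inOddCycle att v}

theorem even_of_walkIn_of_subset_offOddCycles (hS : S ⊆ offOddCycles att)
    (h : WalkIn att S u u n) : Even n := by
  by_contra hn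
  obtain ⟨m, q, hm, hq, hq0⟩ := h.exists_isCycle (Nat.not_even_iff_odd.1 hn)
  exact hS hq0 (hq.inOddCycle_zero hm)

theorem even_of_walkIn_walkEdge_or (hc : ¬ att c c) {H : Set A}
    (hH : ∀ x ∈ H, inOddCycle att x → x = c) {P : ℕ → A} (hP : Set.InjOn P (Set.Iic m))
    (h : WalkIn (fun a b => att a b ∧ (WalkEdge P m a b ∨ a ∈ H ∧ b ∈ H)) .univ u u n) :
    Even n := by
  by_contra hn
  obtain ⟨l, q, hl, hq, -⟩ := h.exists_isCycle (Nat.not_even_iff_odd.1 hn)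
  have hq' : IsCycle att q l := hq.mono fun _ _ h => h.1
  have hqP : IsWalk (WalkEdge P m) q l := by
    intro i hi
    refine (hq.1 i hi).2.resolve_right fun ⟨ha, hb⟩ => hc ?_
    have := (hq.1 i hi).1
    rwa [hH _ ha (hq'.inOddCycle hl hi.le), hH _ hb (hq'.inOddCycle hl hi)] at this
  rw [eq_zero_of_isWalk_walkEdge hP hqP hq.2.1] at hl
  exact Nat.not_odd_zero hl

theorem oneSCC.reflTransGen (h1 : oneSCC att) (u v : A) : Relation.ReflTransGen att u v :=
  (h1 u v).elim (fun h => h ▸ .refl) fun h => h.1.to_reflTransGen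

theorem even_add_of_walkIn_insert_offOddCycles (h1 : oneSCC att) (hc : ¬ att c c)
    (hm : WalkIn att (insert c (offOddCycles att)) v c m)
    (hn : WalkIn att (insert c (offOddCycles att)) v c n) : Even (m + n) := by
  obtain ⟨k, hk⟩ := WalkIn.of_reflTransGen (h1.reflTransGen c v)
  obtain ⟨p, hp, -, hp0, hpk⟩ := hk.exists_isWalk
  obtain ⟨l, P, hP, hP0, hPl, hPinj⟩ := hp.exists_injOn
  set H := insert c (offOddCycles att)
  have hH : ∀ x ∈ H, inOddCycle att x → x = c :=
    fun x hx hodd => hx.resolve_right fun h => h hodd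
  have hPH : IsWalk (fun a b => att a b ∧ (WalkEdge P l a b ∨ a ∈ H ∧ b ∈ H)) P l :=
    fun i hi => ⟨hP i hi, .inl ⟨i, hi, rfl, rfl⟩⟩
  have hclose : ∀ k, WalkIn att H v c k → Even (l + k) := by
    intro k hk
    have hPw := WalkIn.of_isWalk (S := Set.univ) hPH fun _ _ => trivial
    rw [hP0, hp0, hPl, hpk] at hPw
    exact even_of_walkIn_walkEdge_or hc hH hPinj
      (hPw.append (hk.mono (Set.subset_univ _) fun a ha b hb h => ⟨h, .inr ⟨ha, hb⟩⟩))
  have := hclose m hm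
  have := hclose n hn
  grind

def evenReach (att : A → A → Prop) (c : A) : Set A :=
  {v | ∃ n, Even n ∧ WalkIn att (insert c (offOddCycles att)) v c n}

def oddReach (att : A → A → Prop) (c : A) : Set A :=
  {v | ∃ n, Odd n ∧ WalkIn att (insert c (offOddCycles att)) v c n}

theorem self_mem_evenReach : c ∈ evenReach att c :=
  ⟨0, Even.zero, .nil (Set.mem_insert c _)⟩

theorem mem_insert_offOddCycles_of_mem_evenReach (h : v ∈ evenReach att c) :
    v ∈ insert c (offOddCycles att) :=
  let ⟨_, _, h⟩ := h
  h.left_mem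

theorem mem_oddReach_of_att (hu : u ∈ insert c (offOddCycles att)) (huv : att u v)
    (hv : v ∈ evenReach att c) : u ∈ oddReach att c :=
  let ⟨n, hn, h⟩ := hv
  ⟨n + 1, hn.add_one, .cons hu huv h⟩

theorem mem_evenReach_of_att (hu : u ∈ insert c (offOddCycles att)) (huv : att u v)
    (hv : v ∈ oddReach att c) : u ∈ evenReach att c :=
  let ⟨n, hn, h⟩ := hv
  ⟨n + 1, hn.add_one, .cons hu huv h⟩

theorem not_mem_oddReach_of_mem_evenReach (h1 : oneSCC att) (hc : ¬ att c c)
    (he : v ∈ evenReach att c) : v ∉ oddReach att c := by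
  rintro ⟨n, hn, ho⟩
  obtain ⟨m, hm, he⟩ := he
  have := even_add_of_walkIn_insert_offOddCycles h1 hc he ho
  grind

theorem exists_seed [Finite A] (h1 : oneSCC att) (hc : ¬ att c c) :
    ∃ S₀, conflictFree att S₀ ∧ c ∈ S₀ ∧ ∀ x, ¬ inOddCycle att x →
      (∀ y, att y x → ¬ inOddCycle att y) → x ∈ S₀ ∨ attacks att S₀ x := by
  set H := insert c (offOddCycles att)
  set Ev := evenReach att c
  set V := {v ∈ H | v ∉ Ev ∧ v ∉ oddReach att c ∧ ¬ attacks att Ev v}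
  have hVoff : V ⊆ offOddCycles att :=
    fun v hv => hv.1.resolve_left fun h => hv.2.1 (h ▸ self_mem_evenReach)
  obtain ⟨K, hKV, hKcf, hKatt⟩ :=
    exists_kernel V fun _ _ h => even_of_walkIn_of_subset_offOddCycles hVoff h
  refine ⟨Ev ∪ K, ?_, .inl self_mem_evenReach, fun x hx hatt => ?_⟩
  · rintro a (ha | ha) b (hb | hb) hab
    · exact not_mem_oddReach_of_mem_evenReach h1 hc ha
        (mem_oddReach_of_att (mem_insert_offOddCycles_of_mem_evenReach ha) hab hb)
    · exact (hKV hb).2.2.2 ⟨a, ha, hab⟩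
    · exact (hKV ha).2.2.1 (mem_oddReach_of_att (hKV ha).1 hab hb)
    · exact hKcf a ha b hb hab
  by_cases hxE : x ∈ Ev
  · exact .inl (.inl hxE)
  by_cases hxO : x ∈ oddReach att c
  · -- `c` reaches `x`, so `x` has an attacker; it lies outside odd cycles, hence in `Ev`
    have hxc : c ≠ x := fun h => hxE (h ▸ self_mem_evenReach)
    obtain ⟨y, -, hy⟩ := Relation.TransGen.tail'_iff.1 ((h1 c x).resolve_left hxc).1
    exact .inr ⟨y, .inl (mem_evenReach_of_att (.inr (hatt y hy)) hy hxO), hy⟩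
  by_cases hxA : attacks att Ev x
  · exact .inr (hxA.mono Set.subset_union_left)
  by_cases hxK : x ∈ K
  · exact .inl (.inr hxK)
  · exact .inr ((hKatt x ⟨.inr hx, hxE, hxO, hxA⟩ hxK).mono Set.subset_union_right)

theorem scooc_of_subset
    (h : ∀ x, ¬ inOddCycle att x → (∀ y, att y x → ¬ inOddCycle att y) →
      x ∈ S₀ ∨ attacks att S₀ x) (hS₀ : S₀ ⊆ E) : scooc att E :=
  fun x hx hatt hE =>
    (h x hx hatt).elim (@hS₀ x) fun ⟨b, hb, hbx⟩ => absurd hbx (hE b (hS₀ hb))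

end Seed

theorem sccoocNaive_SCCSemiRich [Fintype A] (att : A → A → Prop)
    (h1 : oneSCC att) (c : A) (hc : ¬ att c c) :
    ∃ E, sccoocNaiveExt att E ∧ c ∈ E ∧ ¬ attacks att E c := by
  obtain ⟨S₀, hS₀, hcS₀, hcover⟩ := exists_seed h1 hc
  obtain ⟨E, hS₀E, hE⟩ := Finite.exists_le_maximal (p := conflictFree att) hS₀
  have hcE : c ∈ E := hS₀E hcS₀
  have hE_ext : sccoocNaiveExt att E :=
    ⟨hE.prop, scooc_of_subset hcover hS₀E, fun T hT _ hET => hE.eq_of_superset hT hET⟩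
  exact ⟨E, hE_ext, hcE, fun ⟨b, hb, hbc⟩ => hE.prop b hb c hcE hbc⟩
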